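/- arXiv:2603.18858 — 4 statements merged into one kernel-verified Lean document; each statement's English description precedes it below -/
import Mathlib

section
/- For all integers i ≥ 0 and c ≥ 0, f(i+c) = 1 if and only if frac(i·φ) lies in the circular open interval from frac(−(c+1)φ) to frac(−(c+2)φ) (in the sense that frac((i+c)φ) lies in the circular interval from frac(−φ) to frac(−2φ)). -/
/-!
The letter `fibWord n = ⌊(n+2)γ⌋ - ⌊(n+1)γ⌋` is `1` exactly when `frac((n+1)γ) ≥ 1 - γ`.
Since `γ ≡ -φ (mod 1)` and `φ` is irrational, this says `0 < frac((n+1)φ) < γ = frac(-φ)`.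
A point `y` lies in the circular interval `(a, b)` iff `0 < frac(y - a) < frac(b - a)`, a condition
invariant under rotation; for `y = iφ` and `a = -(c+1)φ` it is the same inequality with `n = i + c`.
-/

noncomputable def phi : ℝ := (1 + Real.sqrt 5) / 2

noncomputable def fibWord (i : ℕ) : ℤ :=
  ⌊((i : ℝ) + 2) * (2 - phi)⌋ - ⌊((i : ℝ) + 1) * (2 - phi)⌋

/-- The circular open interval `(x, y) mod 1`. -/
noncomputable def circIoo (x y : ℝ) : Set ℝ :=
  if Int.fract x < Int.fract y then Set.Ioo (Int.fract x) (Int.fract y)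
  else Set.Ioo (Int.fract x) 1 ∪ Set.Ico 0 (Int.fract y)

namespace Int

variable {R : Type*} [CommRing R] [LinearOrder R] [IsStrictOrderedRing R] [FloorRing R]

theorem floor_add_sub_floor_eq_one_iff {x α : R} (hα : α ≤ 1) :
    ⌊x + α⌋ - ⌊x⌋ = 1 ↔ 1 - α ≤ fract x := by
  have hx : x + α = ⌊x⌋ + (fract x + α) := by rw [← add_assoc, floor_add_fract]
  rw [hx, floor_intCast_add, add_sub_cancel_left, floor_eq_iff]
  have hx1 := fract_lt_one x
  push_cast
  constructor
  · intro h; linarith [h.1]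
  · intro h; constructor <;> linarith

theorem fract_sub_eq_ite (x y : R) :
    fract (x - y) = if fract y ≤ fract x then fract x - fract y else fract x - fract y + 1 := by
  have hx := floor_add_fract x
  have hy := floor_add_fract y
  have hx0 := fract_nonneg x
  have hx1 := fract_lt_one x
  have hy0 := fract_nonneg y
  have hy1 := fract_lt_one y
  rw [fract_eq_iff]
  split_ifs with h
  · refine ⟨by linarith, by linarith, ⌊x⌋ - ⌊y⌋, ?_⟩
    push_cast; linarith
  · refine ⟨by linarith, by linarith, ⌊x⌋ - ⌊y⌋ - 1, ?_⟩
    push_cast; linarith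

end Int

-- `hab` matters: `circIoo a a` is the circle minus a point, while the right side is empty.
theorem fract_mem_circIoo_iff {a b : ℝ} (hab : Int.fract a ≠ Int.fract b) (y : ℝ) :
    Int.fract y ∈ circIoo a b ↔ 0 < Int.fract (y - a) ∧ Int.fract (y - a) < Int.fract (b - a) := by
  have hy0 := Int.fract_nonneg y
  have hy1 := Int.fract_lt_one y
  have ha1 := Int.fract_lt_one a
  have hb0 := Int.fract_nonneg b
  have hb1 := Int.fract_lt_one b
  rw [Int.fract_sub_eq_ite y a, Int.fract_sub_eq_ite b a, circIoo]
  rcases hab.lt_or_gt with h | h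
  · simp only [if_pos h, if_pos h.le, Set.mem_Ioo]
    split_ifs with hy
    · constructor <;> intro h <;> constructor <;> linarith [h.1, h.2]
    · constructor <;> intro h' <;> linarith [h'.1, h'.2]
  · simp only [if_neg h.not_gt, if_neg h.not_ge, Set.mem_union, Set.mem_Ioo, Set.mem_Ico]
    split_ifs with hy
    · constructor
      · rintro (h' | h') <;> constructor <;> linarith [h'.1, h'.2]
      · intro h'; rcases hy.lt_or_eq with hy | hy
        · exact Or.inl ⟨hy, by linarith⟩
        · linarith [h'.1]
    · constructor
      · rintro (h' | h') <;> constructor <;> linarith [h'.1, h'.2]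
      · intro h'; exact Or.inr ⟨by linarith, by linarith [h'.2]⟩

theorem phi_irrational : Irrational phi := Real.goldenRatio_irrational

theorem one_lt_phi : 1 < phi := Real.one_lt_goldenRatio

theorem phi_lt_two : phi < 2 := Real.goldenRatio_lt_two

theorem fract_neg_phi : Int.fract (-phi) = 2 - phi := by
  rw [Int.fract_eq_iff]
  refine ⟨by linarith [phi_lt_two], by linarith [one_lt_phi], -2, ?_⟩
  push_cast; ring

theorem fract_ne_fract_of_irrational_sub {x y : ℝ} (h : Irrational (x - y)) :
    Int.fract x ≠ Int.fract y := by
  rw [Ne, Int.fract_eq_fract, not_exists]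
  exact h.ne_int

theorem fract_natCast_add_one_mul_phi_pos (n : ℕ) : 0 < Int.fract ((n + 1) * phi) := by
  refine (Int.fract_nonneg _).lt_of_ne' fun h => ?_
  obtain ⟨z, hz⟩ := Int.fract_eq_zero_iff.mp h
  exact (phi_irrational.natCast_mul n.succ_ne_zero).ne_int z (by push_cast; exact hz.symm)

theorem fibWord_eq_one_iff (n : ℕ) : fibWord n = 1 ↔ Int.fract ((n + 1) * phi) < 2 - phi := by
  have hne_gap : Int.fract ((n + 1) * phi) ≠ Int.fract (-phi) := by
    apply fract_ne_fract_of_irrational_sub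
    convert phi_irrational.natCast_mul (n + 1).succ_ne_zero using 1
    push_cast; ring
  have hgamma : Int.fract ((n + 1) * (2 - phi)) = 1 - Int.fract ((n + 1) * phi) := by
    rw [← Int.fract_neg (fract_natCast_add_one_mul_phi_pos n).ne',
      show (n + 1) * (2 - phi) = -((n + 1) * phi) + ((2 * n + 2 : ℕ) : ℝ) by push_cast; ring,
      Int.fract_add_natCast]
  rw [fract_neg_phi] at hne_gap
  rw [fibWord, show ((n : ℝ) + 2) * (2 - phi) = (n + 1) * (2 - phi) + (2 - phi) by ring,
    Int.floor_add_sub_floor_eq_one_iff (by linarith [one_lt_phi]), hgamma,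
    sub_le_sub_iff_left, le_iff_lt_or_eq, or_iff_left hne_gap]

theorem stmt1 (i c : ℕ) :
    fibWord (i + c) = 1 ↔
      Int.fract ((i : ℝ) * phi) ∈
        circIoo (-(((c : ℝ) + 1)) * phi) (-(((c : ℝ) + 2)) * phi) := by
  have hne : Int.fract (-((c : ℝ) + 1) * phi) ≠ Int.fract (-((c : ℝ) + 2) * phi) := by
    apply fract_ne_fract_of_irrational_sub
    convert phi_irrational using 1
    ring
  rw [fibWord_eq_one_iff, fract_mem_circIoo_iff hne,
    show (i : ℝ) * phi - -((c : ℝ) + 1) * phi = ((i + c : ℕ) + 1) * phi by push_cast; ring,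
    show -((c : ℝ) + 2) * phi - -((c : ℝ) + 1) * phi = -phi by ring, fract_neg_phi]
  exact (and_iff_right (fract_natCast_add_one_mul_phi_pos _)).symm
end

section
/- Every nonnegative integer n has a unique Zeckendorf representation: there exists a unique finite set S of integers, each ≥ 2, containing no two consecutive integers, such that n = ∑_{i∈S} F_i. -/
/-- `S` is a Zeckendorf representation of `n`: indices are `≥ 2`, no two consecutive,
and the corresponding Fibonacci numbers sum to `n`. -/
def ZeckRep (S : Finset ℕ) (n : ℕ) : Prop :=
  (∀ i ∈ S, 2 ≤ i) ∧ (∀ i ∈ S, i + 1 ∉ S) ∧ ∑ i ∈ S, Nat.fib i = n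

/-!
Mathlib proves Zeckendorf's theorem for lists: `Nat.zeckendorf n` is the unique strictly
decreasing list of non-consecutive indices `≥ 2` whose Fibonacci numbers sum to `n`. A finset
representation corresponds to such a list by sorting it decreasingly, and conversely a list
gives back its finset of entries.
-/

open Nat

namespace List

theorem isZeckendorfRep_iff {l : List ℕ} :
    l.IsZeckendorfRep ↔ l.Pairwise (fun a b ↦ b + 2 ≤ a) ∧ ∀ i ∈ l, 2 ≤ i := by
  have : Trans (fun a b : ℕ ↦ b + 2 ≤ a) (fun a b ↦ b + 2 ≤ a) (fun a b ↦ b + 2 ≤ a) :=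
    ⟨fun hab hbc ↦ by omega⟩
  simp [IsZeckendorfRep, isChain_iff_pairwise, pairwise_append]

theorem IsZeckendorfRep.zeckRep_toFinset {l : List ℕ} (hl : l.IsZeckendorfRep) :
    ZeckRep l.toFinset (l.map fib).sum := by
  obtain ⟨hgap, hge⟩ := isZeckendorfRep_iff.mp hl
  -- symmetrising the gap relation makes it hold between any two distinct entries
  have : Std.Symm fun a b : ℕ ↦ b + 2 ≤ a ∨ a + 2 ≤ b := ⟨fun _ _ ↦ Or.symm⟩
  have hfar := (hgap.imp (S := fun a b : ℕ ↦ b + 2 ≤ a ∨ a + 2 ≤ b) Or.inl).forall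
  refine ⟨fun i hi ↦ hge i (mem_toFinset.mp hi), fun i hi hi' ↦ ?_, ?_⟩
  · have := hfar (mem_toFinset.mp hi) (mem_toFinset.mp hi') (by omega)
    omega
  · exact sum_toFinset _ (hgap.imp fun h ↦ by omega)

end List

theorem ZeckRep.isZeckendorfRep_sort {S : Finset ℕ} {n : ℕ} (h : ZeckRep S n) :
    (S.sort (· ≥ ·)).IsZeckendorfRep := by
  obtain ⟨hge, hgap, -⟩ := h
  refine List.isZeckendorfRep_iff.mpr ⟨?_, fun i hi ↦ hge i (Finset.mem_sort _ |>.mp hi)⟩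
  refine (List.sortedGT_iff_pairwise.mp S.sortedGT_sort).imp_of_mem fun {a b} ha hb hab ↦ ?_
  have : a ≠ b + 1 := fun h ↦ hgap b ((Finset.mem_sort _).mp hb) (h ▸ (Finset.mem_sort _).mp ha)
  omega

theorem Finset.sum_map_sort {α M : Type*} [AddCommMonoid M] (s : Finset α) (r : α → α → Prop)
    [DecidableRel r] [IsTrans α r] [Std.Antisymm r] [Std.Total r] (f : α → M) :
    ((s.sort r).map f).sum = ∑ i ∈ s, f i := by
  rw [Finset.sum_eq_multiset_sum, ← s.sort_eq r, Multiset.map_coe, Multiset.sum_coe]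

theorem stmt6 (n : ℕ) : ∃! S : Finset ℕ, ZeckRep S n := by
  refine ⟨(zeckendorf n).toFinset, ?_, fun S hS ↦ ?_⟩
  · simpa using (isZeckendorfRep_zeckendorf n).zeckRep_toFinset
  · have hsort := zeckendorf_sum_fib hS.isZeckendorfRep_sort
    rw [Finset.sum_map_sort, hS.2.2] at hsort
    rw [hsort, Finset.sort_toFinset]
end

section
/- For every integer n ≥ 1, there is a unique pair (k, m) with k ≥ 2, F_k ≥ n, F_{k−1} < n (for n ≥ 2; and k = 2 for n = 1), and m = F_k − n satisfying 0 ≤ m ≤ F_{k−3} + F_{k−5} + ⋯; moreover if m is written in Zeckendorf form m = ∑_{2≤i≤t} a_i F_i then t ≤ k − 3. That is: if F_k is the smallest Fibonacci number ≥ n (with k ≥ 2), then the largest index appearing in the Zeckendorf representation of F_k − n is at most k − 3 (when F_k − n > 0). -/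
theorem ZeckRep.fib_le {S : Finset ℕ} {m i : ℕ} (hS : ZeckRep S m) (hi : i ∈ S) :
    Nat.fib i ≤ m :=
  hS.2.2 ▸ Finset.single_le_sum (fun _ _ => Nat.zero_le _) hi

theorem Nat.three_le_of_one_lt_fib {k : ℕ} (h : 1 < Nat.fib k) : 3 ≤ k := by
  by_contra! hk
  interval_cases k <;> simp at h

theorem Nat.fib_add_two_sub_lt_fib {j n : ℕ} (hlt : Nat.fib (j + 1) < n)
    (hle : n ≤ Nat.fib (j + 2)) :
    Nat.fib (j + 2) - n < Nat.fib j := by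
  have := Nat.fib_add_two (n := j)
  omega

theorem stmt7_general (n k : ℕ) (hn : 1 ≤ n)
    (hsmallest : ∀ j, 2 ≤ j → n ≤ Nat.fib j → Nat.fib k ≤ Nat.fib j)
    (S : Finset ℕ) (hS : ZeckRep S (Nat.fib k - n)) (hpos : 0 < Nat.fib k - n) :
    ∀ i ∈ S, i ≤ k - 3 := by
  obtain ⟨j, rfl⟩ : ∃ j, k = j + 3 :=
    ⟨k - 3, by have := Nat.three_le_of_one_lt_fib (k := k) (by omega); omega⟩
  have hprev : Nat.fib (j + 2) < n := by
    by_contra! hle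
    have := hsmallest (j + 2) (by omega) hle
    have : Nat.fib (j + 2) < Nat.fib (j + 3) := Nat.fib_lt_fib_succ (by omega)
    omega
  have hle : n ≤ Nat.fib (j + 3) := by omega
  intro i hi
  have hfib : Nat.fib i < Nat.fib (j + 1) :=
    (hS.fib_le hi).trans_lt (Nat.fib_add_two_sub_lt_fib hprev hle)
  have := Nat.fib_mono.reflect_lt hfib
  omega

theorem stmt7 (n k : ℕ) (hn : 1 ≤ n) (hk : 2 ≤ k)
    (hge : n ≤ Nat.fib k)
    (hsmallest : ∀ j, 2 ≤ j → n ≤ Nat.fib j → Nat.fib k ≤ Nat.fib j)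
    (S : Finset ℕ) (hS : ZeckRep S (Nat.fib k - n)) (hpos : 0 < Nat.fib k - n) :
    ∀ i ∈ S, i ≤ k - 3 :=
  stmt7_general n k hn hsmallest S hS hpos
end

section
/- If n is a nonnegative integer whose Zeckendorf representation ends in digit 0 (i.e., F_2 does not appear, equivalently f(n) = 0 where f is the Fibonacci word), then both appended numbers n^{(0)} and n^{(1)} have valid Zeckendorf representations, and f(n) = 1 if and only if the least significant Zeckendorf digit of n is 1. -/
/-!
Since `2 - φ = ψ²` and `Fₖ ψ² = Fₖ₋₂ + ψᵏ` for `k ≥ 2`, a Zeckendorf representation `n = ∑_{k ∈ S} Fₖ`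
gives `n (2 - φ) = M + T` with `M ∈ ℕ` and `T = ∑_{k ∈ S} ψᵏ`. Because `S` has no two consecutive
indices, `T` is squeezed between geometric tails of `|ψ| = φ⁻¹`, which satisfies `|ψ| + |ψ|² = 1`:
this gives `⌊(n + 1)(2 - φ)⌋ = M`, and `⌊(n + 2)(2 - φ)⌋ - M = ⌊2ψ² + T⌋` is `1` or `0` according
as the smallest index `2` lies in `S` or not. Shifting the indices up by one preserves the
Zeckendorf conditions, and when `2 ∉ S` so does adding the index `2` back.
-/

open Real goldenRatio

lemma two_sub_phi : 2 - phi = ψ ^ 2 := by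
  rw [goldenConj_sq, ← one_sub_goldenConj]; unfold phi; ring

lemma fib_add_two_mul_goldenConj_sq (i : ℕ) :
    (Nat.fib (i + 2) : ℝ) * ψ ^ 2 = Nat.fib i + ψ ^ (i + 2) := by
  linear_combination ψ * goldenConj_mul_fib_succ_add_fib (i + 1) -
    goldenConj_mul_fib_succ_add_fib i + ψ ^ (i + 1) * goldenConj_sq

lemma sum_pow_lt_pow {a : ℝ} (ha : 0 < a) (ha2 : a + a ^ 2 ≤ 1) (S : Finset ℕ) :
    ∀ k, (∀ i ∈ S, k < i) → (∀ i ∈ S, i + 1 ∉ S) → ∑ i ∈ S, a ^ i < a ^ k := by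
  induction S using Finset.induction_on_min with
  | empty => intro k _ _; simpa using pow_pos ha k
  | insert m S hmS ih =>
    intro k hk hS
    have hm : m ∉ S := fun h => (hmS m h).false
    have hgap : ∀ i ∈ S, m + 1 < i := fun i hi =>
      lt_of_le_of_ne (hmS i hi) fun h => hS m (S.mem_insert_self m) (h ▸ S.mem_insert_of_mem hi)
    have hrest := ih (m + 1) hgap fun i hi h => hS i (S.mem_insert_of_mem hi) (S.mem_insert_of_mem h)
    obtain ⟨j, rfl⟩ : ∃ j, m = j + 1 := ⟨m - 1, by have := hk m (S.mem_insert_self m); omega⟩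
    have hjk : k ≤ j := Nat.lt_succ_iff.mp (hk _ (S.mem_insert_self _))
    calc ∑ i ∈ insert (j + 1) S, a ^ i = a ^ (j + 1) + ∑ i ∈ S, a ^ i := Finset.sum_insert hm
      _ < a ^ (j + 1) + a ^ (j + 2) := by gcongr
      _ = a ^ j * (a + a ^ 2) := by ring
      _ ≤ a ^ j := mul_le_of_le_one_right (pow_nonneg ha.le j) ha2
      _ ≤ a ^ k := pow_le_pow_of_le_one ha.le (by nlinarith) hjk

lemma sum_goldenConj_pow_lt {S : Finset ℕ} {k : ℕ} (hk : ∀ i ∈ S, Even i → k < i)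
    (hS : ∀ i ∈ S, i + 1 ∉ S) : ∑ i ∈ S, ψ ^ i < (-ψ) ^ k := by
  have hψ : 0 < -ψ := neg_pos.mpr goldenConj_neg
  calc ∑ i ∈ S, ψ ^ i ≤ ∑ i ∈ S.filter Even, (-ψ) ^ i := by
        rw [Finset.sum_filter]
        gcongr with i
        split_ifs with hi
        · rw [hi.neg_pow]
        · exact (Nat.not_even_iff_odd.mp hi).pow_nonpos goldenConj_neg.le
    _ < (-ψ) ^ k := sum_pow_lt_pow hψ (by linear_combination goldenConj_sq) _ k
        (fun i hi => hk i (Finset.mem_filter.mp hi).1 (Finset.mem_filter.mp hi).2)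
        (fun i hi h => hS i (Finset.mem_filter.mp hi).1 (Finset.mem_filter.mp h).1)

lemma neg_pow_lt_sum_goldenConj_pow {S : Finset ℕ} {k : ℕ} (hk : ∀ i ∈ S, Odd i → k < i)
    (hS : ∀ i ∈ S, i + 1 ∉ S) : -(-ψ) ^ k < ∑ i ∈ S, ψ ^ i := by
  have hψ : 0 < -ψ := neg_pos.mpr goldenConj_neg
  calc -(-ψ) ^ k < -∑ i ∈ S.filter Odd, (-ψ) ^ i := by
        gcongr
        exact sum_pow_lt_pow hψ (by linear_combination goldenConj_sq) _ k
          (fun i hi => hk i (Finset.mem_filter.mp hi).1 (Finset.mem_filter.mp hi).2)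
          (fun i hi h => hS i (Finset.mem_filter.mp hi).1 (Finset.mem_filter.mp h).1)
    _ ≤ ∑ i ∈ S, ψ ^ i := by
        rw [Finset.sum_filter, ← Finset.sum_neg_distrib]
        gcongr with i
        split_ifs with hi
        · rw [hi.neg_pow, neg_neg]
        · rw [neg_zero]
          exact (Nat.not_odd_iff_even.mp hi).pow_nonneg ψ

lemma ZeckRep.mul_two_sub_phi {S : Finset ℕ} {n : ℕ} (hS : ZeckRep S n) :
    (n : ℝ) * (2 - phi) = ((∑ i ∈ S, Nat.fib (i - 2) : ℕ) : ℝ) + ∑ i ∈ S, ψ ^ i := by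
  rw [two_sub_phi, ← hS.2.2]
  push_cast
  rw [Finset.sum_mul, ← Finset.sum_add_distrib]
  refine Finset.sum_congr rfl fun i hi => ?_
  obtain ⟨j, rfl⟩ : ∃ j, i = j + 2 := ⟨i - 2, by have := hS.1 i hi; omega⟩
  simpa using fib_add_two_mul_goldenConj_sq j

lemma fibWord_eq_floor {n M : ℕ} {T : ℝ} (h : n * (2 - phi) = M + T) (h0 : 0 ≤ ψ ^ 2 + T)
    (h1 : ψ ^ 2 + T < 1) : fibWord n = ⌊2 * ψ ^ 2 + T⌋ := by
  rw [two_sub_phi] at h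
  have e1 : ((n : ℝ) + 1) * (2 - phi) = (ψ ^ 2 + T) + M := by
    rw [two_sub_phi]; linear_combination h
  have e2 : ((n : ℝ) + 2) * (2 - phi) = (2 * ψ ^ 2 + T) + M := by
    rw [two_sub_phi]; linear_combination h
  unfold fibWord
  rw [e1, e2, Int.floor_add_natCast, Int.floor_add_natCast, Int.floor_eq_zero_iff.mpr ⟨h0, h1⟩]
  ring

theorem ZeckRep.fibWord_eq {S : Finset ℕ} {n : ℕ} (hS : ZeckRep S n) :
    fibWord n = if 2 ∈ S then 1 else 0 := by
  have hdec := hS.mul_two_sub_phi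
  obtain ⟨hge, hsep, -⟩ := hS
  have hψ2 := goldenConj_sq
  have hψ := goldenConj_neg
  have hψ' := neg_one_lt_goldenConj
  have hlo : -ψ ^ 2 < ∑ i ∈ S, ψ ^ i := by
    simpa using neg_pow_lt_sum_goldenConj_pow (k := 2)
      (fun i hi ⟨j, hj⟩ => by have := hge i hi; omega) hsep
  have hhi : ∑ i ∈ S, ψ ^ i < -ψ := by
    simpa using sum_goldenConj_pow_lt (k := 1) (fun i hi _ => hge i hi) hsep
  rw [fibWord_eq_floor hdec (by linarith) (by linarith)]
  split_ifs with h2S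
  · have h3S : 3 ∉ S := hsep 2 h2S
    have hodd : ∀ i ∈ S.erase 2, Odd i → 4 < i := fun i hi ⟨j, hj⟩ => by
      have := hge i (Finset.mem_of_mem_erase hi)
      have : i ≠ 3 := fun h => h3S (h ▸ Finset.mem_of_mem_erase hi)
      omega
    have hrest := neg_pow_lt_sum_goldenConj_pow hodd
      fun i hi h => hsep i (Finset.mem_of_mem_erase hi) (Finset.mem_of_mem_erase h)
    rw [Even.neg_pow (by decide)] at hrest
    have hψ4 : ψ ^ 4 = 3 * ψ + 2 := by linear_combination (ψ ^ 2 + ψ + 2) * hψ2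
    have hsplit := Finset.add_sum_erase S (ψ ^ ·) h2S
    rw [Int.floor_eq_iff]
    constructor <;> push_cast <;> linarith
  · have heven : ∀ i ∈ S, Even i → 3 < i := fun i hi ⟨j, hj⟩ => by
      have := hge i hi
      have : i ≠ 2 := fun h => h2S (h ▸ hi)
      omega
    have hhi' := sum_goldenConj_pow_lt heven hsep
    rw [Odd.neg_pow (by decide)] at hhi'
    have hψ3 : ψ ^ 3 = 2 * ψ + 1 := by linear_combination (ψ + 1) * hψ2
    rw [Int.floor_eq_zero_iff]
    constructor <;> linarith

lemma ZeckRep.image_succ {S : Finset ℕ} {n : ℕ} (hS : ZeckRep S n) :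
    ZeckRep (S.image (· + 1)) (∑ i ∈ S, Nat.fib (i + 1)) := by
  obtain ⟨hge, hsep, -⟩ := hS
  refine ⟨?_, ?_, Finset.sum_image fun _ _ _ _ => Nat.add_right_cancel⟩
  · simp only [Finset.mem_image, forall_exists_index, and_imp, forall_apply_eq_imp_iff₂]
    exact fun i hi => (hge i hi).trans (Nat.le_succ i)
  · simp only [Finset.mem_image, forall_exists_index, and_imp, forall_apply_eq_imp_iff₂,
      Nat.add_right_cancel_iff, not_exists, not_and]
    exact fun i hi j hj hji => hsep i hi (hji ▸ hj)

lemma ZeckRep.insert_two_image_succ {S : Finset ℕ} {n : ℕ} (hS : ZeckRep S n) (h2S : 2 ∉ S) :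
    ZeckRep (insert 2 (S.image (· + 1))) (∑ i ∈ S, Nat.fib (i + 1) + Nat.fib 2) := by
  have h2 : 2 ∉ S.image (· + 1) := fun h => by
    obtain ⟨i, hi, hi2⟩ := Finset.mem_image.mp h
    have := hS.1 i hi
    omega
  obtain ⟨hge, hsep, hsum⟩ := hS.image_succ
  refine ⟨?_, ?_, by rw [Finset.sum_insert h2, hsum, add_comm]⟩
  · simpa only [Finset.mem_insert, forall_eq_or_imp, le_refl, true_and] using hge
  · simp only [Finset.mem_insert, forall_eq_or_imp]
    refine ⟨?_, fun i hi => ?_⟩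
    · rintro (h | h)
      · omega
      · obtain ⟨i, hi, hi3⟩ := Finset.mem_image.mp h
        exact h2S (by rwa [show i = 2 by omega] at hi)
    · rintro (h | h)
      · have := hge i hi
        omega
      · exact hsep i hi h

theorem stmt14 (n : ℕ) (S : Finset ℕ) (hS : ZeckRep S n) :
    (fibWord n = 1 ↔ 2 ∈ S) ∧
    (fibWord n = 0 →
      ZeckRep (S.image (· + 1)) (∑ i ∈ S, Nat.fib (i + 1)) ∧
      ZeckRep (insert 2 (S.image (· + 1))) ((∑ i ∈ S, Nat.fib (i + 1)) + Nat.fib 2)) := by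
  have hfib := hS.fibWord_eq
  refine ⟨by split_ifs at hfib with h2S <;> simp [hfib, h2S], fun h0 => ?_⟩
  have h2S : 2 ∉ S := fun h2S => by simp [hfib, h2S] at h0
  exact ⟨hS.image_succ, hS.insert_two_image_succ h2S⟩
end
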